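/- (Full-rank case: vanishing of correction terms and uniqueness.) Suppose the pure state |φ⟩_{AR} = φ_R^{1/2}|Φ_{A:R}⟩ achieving the minimum in the channel entropy of a thermal quantum channel T has full-rank reduced matrix φ_R. Then in the canonical form of the Choi matrix J(T) = φ_R^{−1/2} exp( −φ_R^{−1/2} [ ∑_j μ_j C^j_{BR} − 1_B⊗(F_R + φ_R log φ_R) − S_{BR} ] φ_R^{−1/2} ) φ_R^{−1/2} + Y_{BR} one necessarily has S_{BR} = 0 and Y_{BR} = 0, and the thermal quantum channel T is the unique optimizer of the maximum channel entropy problem. -/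

import Mathlib

open Matrix BigOperators MeasureTheory
open scoped Kronecker ComplexOrder

noncomputable section

namespace ThermalChannel

/-- Square complex matrices of size `d`. -/
abbrev Mat (d : ℕ) := Matrix (Fin d) (Fin d) ℂ

/-- A density matrix: positive semidefinite with unit trace. -/
def IsDensity {ι : Type*} [Fintype ι] (ρ : Matrix ι ι ℂ) : Prop :=
  ρ.PosSemidef ∧ ρ.trace = 1

/-- The map `L ⊗ id_R` applied to a matrix on `A × R`. -/
def extendId {A B R : Type*} [Fintype A] [Fintype B] [Fintype R]
    (L : Matrix A A ℂ →ₗ[ℂ] Matrix B B ℂ)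
    (M : Matrix (A × R) (A × R) ℂ) : Matrix (B × R) (B × R) ℂ :=
  Matrix.of fun p q => L (Matrix.of fun x y => M (x, p.2) (y, q.2)) p.1 q.1

/-- A quantum channel: a completely positive trace-preserving linear map. -/
def IsChannel {A B : Type*} [Fintype A] [Fintype B]
    (L : Matrix A A ℂ →ₗ[ℂ] Matrix B B ℂ) : Prop :=
  (∀ (k : ℕ) (M : Matrix (A × Fin k) (A × Fin k) ℂ), M.PosSemidef →
    (extendId L M).PosSemidef) ∧
  (∀ M, (L M).trace = M.trace)

/-- The (unnormalized) maximally entangled projector `|Φ⟩⟨Φ|`,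
`|Φ⟩ = ∑ j |j⟩|j⟩`. -/
def PhiMat (A : Type*) [DecidableEq A] : Matrix (A × A) (A × A) ℂ :=
  Matrix.of fun p q => if p.1 = p.2 ∧ q.1 = q.2 then 1 else 0

/-- The Choi matrix `J(L) = (L ⊗ id)(Φ)`. -/
def choi {A B : Type*} [Fintype A] [DecidableEq A] [Fintype B]
    (L : Matrix A A ℂ →ₗ[ℂ] Matrix B B ℂ) : Matrix (B × A) (B × A) ℂ :=
  extendId L (PhiMat A)

/-- Partial trace over the first tensor factor. -/
def ptraceFst {B R : Type*} [Fintype B] (M : Matrix (B × R) (B × R) ℂ) :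
    Matrix R R ℂ :=
  Matrix.of fun x y => ∑ b, M (b, x) (b, y)

/-- Partial trace over the second tensor factor. -/
def ptraceSnd {B R : Type*} [Fintype R] (M : Matrix (B × R) (B × R) ℂ) :
    Matrix B B ℂ :=
  Matrix.of fun x y => ∑ r, M (x, r) (y, r)

open Classical in
/-- Functional calculus for Hermitian matrices (junk value `0` for
non-Hermitian matrices): apply `f` to the eigenvalues. -/
def mfun {ι : Type*} [Fintype ι] [DecidableEq ι] (f : ℝ → ℝ) (M : Matrix ι ι ℂ) :
    Matrix ι ι ℂ :=
  if h : M.IsHermitian then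
    (h.eigenvectorUnitary : Matrix ι ι ℂ) *
      Matrix.diagonal (fun i => (f (h.eigenvalues i) : ℂ)) *
      star (h.eigenvectorUnitary : Matrix ι ι ℂ)
  else 0

/-- Matrix square root (of a positive semidefinite matrix). -/
def msqrt {ι : Type*} [Fintype ι] [DecidableEq ι] (M : Matrix ι ι ℂ) : Matrix ι ι ℂ :=
  mfun Real.sqrt M

open Classical in
/-- Moore–Penrose pseudo-inverse square root of a positive semidefinite matrix. -/
def minvsqrt {ι : Type*} [Fintype ι] [DecidableEq ι] (M : Matrix ι ι ℂ) : Matrix ι ι ℂ :=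
  mfun (fun x => if x = 0 then 0 else (Real.sqrt x)⁻¹) M

open Classical in
/-- Orthogonal projector onto the support. -/
def suppProj {ι : Type*} [Fintype ι] [DecidableEq ι] (M : Matrix ι ι ℂ) : Matrix ι ι ℂ :=
  mfun (fun x => if x = 0 then 0 else 1) M

/-- Matrix logarithm, taken spectrally on the support (`log 0 := 0`). -/
def mlog {ι : Type*} [Fintype ι] [DecidableEq ι] (M : Matrix ι ι ℂ) : Matrix ι ι ℂ :=
  mfun Real.log M

/-- `M log M`, defined spectrally with `0 log 0 := 0`. -/
def xlogx {ι : Type*} [Fintype ι] [DecidableEq ι] (M : Matrix ι ι ℂ) : Matrix ι ι ℂ :=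
  mfun (fun x => x * Real.log x) M

/-- Matrix exponential (of a Hermitian matrix). -/
def mexp {ι : Type*} [Fintype ι] [DecidableEq ι] (M : Matrix ι ι ℂ) : Matrix ι ι ℂ :=
  mfun Real.exp M

open Classical in
/-- Von Neumann entropy `S(ρ) = -∑ λᵢ log λᵢ` (junk value `0` for
non-Hermitian matrices); `0 log 0 := 0` since `Real.log 0 = 0`. -/
def vnEntropy {ι : Type*} [Fintype ι] [DecidableEq ι] (M : Matrix ι ι ℂ) : ℝ :=
  if h : M.IsHermitian then -∑ i, h.eigenvalues i * Real.log (h.eigenvalues i) else 0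

/-- Conditional entropy `S(B|R)_τ = S(τ) - S(tr_B τ)`. -/
def condEntropy {B R : Type*} [Fintype B] [Fintype R] [DecidableEq B] [DecidableEq R]
    (τ : Matrix (B × R) (B × R) ℂ) : ℝ :=
  vnEntropy τ - vnEntropy (ptraceFst τ)

/-- The channel entropy `S(N) = min_{ρ_{AR}} S(B|R)_{(N ⊗ id)(ρ_{AR})}`. -/
def channelEntropy {A B : Type*} [Fintype A] [Fintype B] [DecidableEq A] [DecidableEq B]
    (L : Matrix A A ℂ →ₗ[ℂ] Matrix B B ℂ) : ℝ :=
  sInf {x | ∃ ρ : Matrix (A × A) (A × A) ℂ, IsDensity ρ ∧ x = condEntropy (extendId L ρ)}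

/-- The pure state `|φ⟩⟨φ|` with `|φ⟩ = φ_R^{1/2} |Φ_{A:R}⟩`, the square root
acting on the reference factor `R`. -/
def stateAR {A : Type*} [Fintype A] [DecidableEq A] (φR : Matrix A A ℂ) :
    Matrix (A × A) (A × A) ℂ :=
  ((1 : Matrix A A ℂ) ⊗ₖ msqrt φR) * PhiMat A * ((1 : Matrix A A ℂ) ⊗ₖ msqrt φR)

/-- A channel is feasible if it reproduces the prescribed expectation values
`tr[C^j J(N)] = q_j`. -/
def Feasible {dA dB J : ℕ} (C : Fin J → Matrix (Fin dB × Fin dA) (Fin dB × Fin dA) ℂ)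
    (q : Fin J → ℝ) (L : Mat dA →ₗ[ℂ] Mat dB) : Prop :=
  IsChannel L ∧ ∀ j, (C j * choi L).trace = (q j : ℂ)

/-- A thermal quantum channel: an optimizer of the maximum channel entropy
problem. -/
def IsThermalChannel {dA dB J : ℕ}
    (C : Fin J → Matrix (Fin dB × Fin dA) (Fin dB × Fin dA) ℂ) (q : Fin J → ℝ)
    (T : Mat dA →ₗ[ℂ] Mat dB) : Prop :=
  Feasible C q T ∧ ∀ L, Feasible C q L → channelEntropy L ≤ channelEntropy T


/-- `exp` taken on the subspace determined by the projector `P`. -/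
def expSupp {ι : Type*} [Fintype ι] [DecidableEq ι] (P X : Matrix ι ι ℂ) :
    Matrix ι ι ℂ :=
  mexp X - (1 - P)

/-!
Since `φ_R` is invertible, its support projector is `1`, so `Y = 0` and
`J(T) = φ_R^{-1/2} e^{X'} φ_R^{-1/2}` is invertible, which turns `S · J(T) = 0` into `S = 0`.
The output state `τ_N = (N ⊗ id)(φ) = φ_R^{1/2} J(N) φ_R^{1/2}` of `T` is then the Gibbs state
`e^X` with `X = -φ_R^{-1/2} (∑ μ_j C^j - 1 ⊗ (F + φ_R log φ_R)) φ_R^{-1/2}`, and for every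
feasible `N` the expectation `tr(τ_N X)` is fixed by the constraints. For a second optimizer `N`,
`S(τ_T) - S(φ_R) = S(T) = S(N) ≤ S(τ_N) - S(φ_R)`, while Gibbs' inequality gives
`S(τ_N) ≤ -tr(τ_N X) = -tr(τ_T X) = S(τ_T)`, with equality only if `τ_N = e^X = τ_T`;
cancelling `φ_R^{1/2}` gives `J(N) = J(T)`.

Gibbs' inequality is proved in the two eigenbases: for `ρ = U diag(p) U*` and
`X = V diag(e) V*`, the gap `-S(ρ) - tr(ρ X)` equals `∑ᵢⱼ |(U* V)ᵢⱼ|² e^{eⱼ} klFun(pᵢ / e^{eⱼ})`,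
because `|(U* V)ᵢⱼ|²` is doubly stochastic.
-/

section FunctionalCalculus

variable {ι : Type*} [Fintype ι] [DecidableEq ι] {M : Matrix ι ι ℂ}

theorem continuousOn_spectrum (f : ℝ → ℝ) (M : Matrix ι ι ℂ) :
    ContinuousOn f (spectrum ℝ M) :=
  M.finite_real_spectrum.continuousOn f

theorem cfc_eq_eigenvectorUnitary_mul (f : ℝ → ℝ) (hM : M.IsHermitian) :
    cfc f M = (hM.eigenvectorUnitary : Matrix ι ι ℂ) *
      diagonal (fun i => (f (hM.eigenvalues i) : ℂ)) *
      star (hM.eigenvectorUnitary : Matrix ι ι ℂ) := by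
  rw [hM.cfc_eq, IsHermitian.cfc, Unitary.conjStarAlgAut_apply]
  rfl

theorem eq_eigenvectorUnitary_mul (hM : M.IsHermitian) :
    M = (hM.eigenvectorUnitary : Matrix ι ι ℂ) * diagonal (fun i => (hM.eigenvalues i : ℂ)) *
      star (hM.eigenvectorUnitary : Matrix ι ι ℂ) :=
  (cfc_id' ℝ M hM.isSelfAdjoint).symm.trans (cfc_eq_eigenvectorUnitary_mul _ hM)

theorem sum_eigenvalues_eq_one (hM : M.IsHermitian) (h1 : M.trace = 1) :
    ∑ i, hM.eigenvalues i = 1 := by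
  refine RCLike.ofReal_injective (K := ℂ) ?_
  rw [RCLike.ofReal_sum, ← hM.trace_eq_sum_eigenvalues, h1, RCLike.ofReal_one]

theorem mfun_eq_cfc (f : ℝ → ℝ) (hM : M.IsHermitian) :
    mfun f M = cfc f M := by
  rw [mfun, dif_pos hM, cfc_eq_eigenvectorUnitary_mul f hM]

theorem trace_cfc (f : ℝ → ℝ) (hM : M.IsHermitian) :
    (cfc f M).trace = ∑ i, (f (hM.eigenvalues i) : ℂ) := by
  rw [cfc_eq_eigenvectorUnitary_mul f hM, trace_mul_cycle, Unitary.coe_star_mul_self,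
    Matrix.one_mul, trace_diagonal]

theorem vnEntropy_eq_neg_re_trace_cfc (hM : M.IsHermitian) :
    vnEntropy M = -(cfc (fun x => x * Real.log x) M).trace.re := by
  rw [vnEntropy, dif_pos hM, trace_cfc _ hM, ← Complex.ofReal_sum, Complex.ofReal_re]

theorem _root_.Matrix.PosSemidef.nonneg_of_mem_spectrum (hM : M.PosSemidef) {x : ℝ}
    (hx : x ∈ spectrum ℝ M) : 0 ≤ x := by
  rw [hM.isHermitian.spectrum_real_eq_range_eigenvalues] at hx
  obtain ⟨i, rfl⟩ := hx
  exact hM.eigenvalues_nonneg i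

theorem _root_.Matrix.PosDef.pos_of_mem_spectrum (hM : M.PosDef) {x : ℝ}
    (hx : x ∈ spectrum ℝ M) : 0 < x := by
  rw [hM.isHermitian.spectrum_real_eq_range_eigenvalues] at hx
  obtain ⟨i, rfl⟩ := hx
  exact hM.eigenvalues_pos i

theorem suppProj_eq_one_of_posDef (hM : M.PosDef) : suppProj M = 1 := by
  rw [suppProj, mfun_eq_cfc _ hM.isHermitian, ← cfc_const_one ℝ M hM.isHermitian.isSelfAdjoint]
  exact cfc_congr fun x hx => if_neg (hM.pos_of_mem_spectrum hx).ne'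

theorem msqrt_mul_minvsqrt_of_posDef (hM : M.PosDef) : msqrt M * minvsqrt M = 1 := by
  rw [msqrt, minvsqrt, mfun_eq_cfc _ hM.isHermitian, mfun_eq_cfc _ hM.isHermitian,
    ← cfc_mul _ _ M (continuousOn_spectrum _ M) (continuousOn_spectrum _ M),
    ← cfc_const_one ℝ M hM.isHermitian.isSelfAdjoint]
  refine cfc_congr fun x hx => ?_
  have hx : 0 < x := hM.pos_of_mem_spectrum hx
  simp only [if_neg hx.ne']
  exact mul_inv_cancel₀ (Real.sqrt_pos.mpr hx).ne'

theorem msqrt_mul_self_of_posSemidef (hM : M.PosSemidef) : msqrt M * msqrt M = M := by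
  rw [msqrt, mfun_eq_cfc _ hM.isHermitian, ← cfc_mul _ _ M]
  exact (cfc_congr fun x hx => Real.mul_self_sqrt (hM.nonneg_of_mem_spectrum hx)).trans
    (cfc_id' ℝ M hM.isHermitian.isSelfAdjoint)

theorem isHermitian_mfun (f : ℝ → ℝ) (M : Matrix ι ι ℂ) : (mfun f M).IsHermitian := by
  by_cases hM : M.IsHermitian
  · rw [mfun_eq_cfc f hM]
    exact cfc_predicate f M
  · rw [mfun, dif_neg hM]
    exact isHermitian_zero

theorem isHermitian_msqrt (M : Matrix ι ι ℂ) : (msqrt M).IsHermitian :=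
  isHermitian_mfun _ M

theorem isUnit_mexp (hM : M.IsHermitian) : IsUnit (mexp M) := by
  rw [mexp, mfun_eq_cfc _ hM, isUnit_cfc_iff _ M]
  exact fun x _ => Real.exp_ne_zero x

theorem vnEntropy_mexp (hM : M.IsHermitian) :
    vnEntropy (mexp M) = -(mexp M * M).trace.re := by
  have hexp : (mexp M).IsHermitian := isHermitian_mfun _ M
  rw [vnEntropy_eq_neg_re_trace_cfc hexp, mexp, mfun_eq_cfc _ hM,
    ← cfc_comp' _ _ M ((M.finite_real_spectrum.image _).continuousOn _)]
  have hmul : cfc (fun x => Real.exp x * x) M = cfc Real.exp M * M := by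
    rw [cfc_mul _ _ M, cfc_id' ℝ M hM.isSelfAdjoint]
  simp only [Real.log_exp, hmul]

end FunctionalCalculus

section GibbsInequality

open InformationTheory

theorem mul_log_sub_mul_add_exp_sub_eq (p e : ℝ) :
    p * Real.log p - p * e + Real.exp e - p = Real.exp e * klFun (p / Real.exp e) := by
  rcases eq_or_ne p 0 with rfl | hp
  · simp [klFun]
  · rw [klFun, Real.log_div hp (Real.exp_ne_zero e), Real.log_exp]
    field_simp

theorem sum_mul_log_sub_eq_sum_klFun {ι : Type*} [Fintype ι] {w : ι → ι → ℝ}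
    (hrow : ∀ i, ∑ j, w i j = 1) (hcol : ∀ j, ∑ i, w i j = 1) {p e : ι → ℝ} (hp : ∑ i, p i = 1)
    (he : ∑ j, Real.exp (e j) = 1) :
    ∑ i, p i * Real.log (p i) - ∑ i, ∑ j, p i * e j * w i j
      = ∑ i, ∑ j, w i j * (Real.exp (e j) * klFun (p i / Real.exp (e j))) := by
  simp only [← mul_log_sub_mul_add_exp_sub_eq, mul_sub, mul_add, Finset.sum_sub_distrib,
    Finset.sum_add_distrib]
  have hmul_row : ∀ f : ι → ℝ, ∑ i, ∑ j, w i j * f i = ∑ i, f i := fun f => by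
    simp [← Finset.sum_mul, hrow]
  have hmul_col : ∀ f : ι → ℝ, ∑ i, ∑ j, w i j * f j = ∑ j, f j := fun f => by
    rw [Finset.sum_comm]; simp [← Finset.sum_mul, hcol]
  rw [hmul_row, hmul_col, hmul_row, he, hp, add_sub_cancel_right]
  simp only [mul_comm (w _ _)]

variable {ι : Type*} [Fintype ι] [DecidableEq ι]

theorem sum_normSq_row_eq_one {W : Matrix ι ι ℂ} (hW : W ∈ unitaryGroup ι ℂ) (i : ι) :
    ∑ j, Complex.normSq (W i j) = 1 := by
  have h := congr_fun (congr_fun (mem_unitaryGroup_iff.mp hW) i) i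
  simp only [mul_apply, star_apply, RCLike.star_def, Complex.mul_conj, one_apply_eq] at h
  exact_mod_cast h

theorem sum_normSq_col_eq_one {W : Matrix ι ι ℂ} (hW : W ∈ unitaryGroup ι ℂ) (j : ι) :
    ∑ i, Complex.normSq (W i j) = 1 := by
  simpa using sum_normSq_row_eq_one (Unitary.star_mem hW) j

theorem trace_conj_diagonal_mul_conj_diagonal (U V : Matrix ι ι ℂ) (a b : ι → ℝ) :
    (U * diagonal (fun i => (a i : ℂ)) * star U *
        (V * diagonal (fun j => (b j : ℂ)) * star V)).trace
      = ((∑ i, ∑ j, a i * b j * Complex.normSq ((star U * V) i j) : ℝ) : ℂ) := by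
  set W := star U * V
  have hcycle : (U * diagonal (fun i => (a i : ℂ)) * star U *
        (V * diagonal (fun j => (b j : ℂ)) * star V)).trace
      = (diagonal (fun i => (a i : ℂ)) * W * diagonal (fun j => (b j : ℂ)) * star W).trace := by
    rw [star_mul, star_star]
    simp only [W, Matrix.mul_assoc]
    rw [trace_mul_comm U]
    simp only [Matrix.mul_assoc]
  rw [hcycle]
  simp only [Matrix.mul_assoc, trace, diag_apply, diagonal_mul]
  simp only [mul_apply, diagonal_apply, star_apply, Complex.star_def, Finset.mul_sum, ite_mul,
    zero_mul, Finset.sum_ite_eq, Finset.mem_univ, if_true]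
  push_cast
  refine Finset.sum_congr rfl fun i _ => Finset.sum_congr rfl fun j _ => ?_
  rw [← Complex.mul_conj]
  ring

theorem conj_diagonal_eq_of_apply_ne_zero {U V : Matrix ι ι ℂ} (hU : U ∈ unitaryGroup ι ℂ)
    (hV : V ∈ unitaryGroup ι ℂ) {a b : ι → ℝ}
    (h : ∀ i j, (star U * V) i j ≠ 0 → a i = b j) :
    U * diagonal (fun i => (a i : ℂ)) * star U =
      V * diagonal (fun j => (b j : ℂ)) * star V := by
  have hcomm : diagonal (fun i => (a i : ℂ)) * (star U * V)
      = star U * V * diagonal (fun j => (b j : ℂ)) := by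
    ext i j
    rw [diagonal_mul, mul_diagonal]
    by_cases hz : (star U * V) i j = 0
    · simp [hz]
    · rw [h i j hz, mul_comm]
  calc U * diagonal (fun i => (a i : ℂ)) * star U
      = U * (diagonal (fun i => (a i : ℂ)) * (star U * V)) * star V := by
        simp only [Matrix.mul_assoc, mem_unitaryGroup_iff.mp hV, Matrix.mul_one]
    _ = V * diagonal (fun j => (b j : ℂ)) * star V := by
        rw [hcomm]
        simp only [← Matrix.mul_assoc, mem_unitaryGroup_iff.mp hU, Matrix.one_mul]

variable {ρ X : Matrix ι ι ℂ}

theorem neg_vnEntropy_sub_re_trace_mul_eq (hρ : ρ.IsHermitian) (hρ1 : ρ.trace = 1)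
    (hX : X.IsHermitian) (hX1 : (mexp X).trace = 1) :
    -vnEntropy ρ - (ρ * X).trace.re =
      ∑ i, ∑ j, Complex.normSq
          ((star (hρ.eigenvectorUnitary : Matrix ι ι ℂ) * hX.eigenvectorUnitary) i j) *
        (Real.exp (hX.eigenvalues j) *
          klFun (hρ.eigenvalues i / Real.exp (hX.eigenvalues j))) := by
  have hW := mul_mem (Unitary.star_mem hρ.eigenvectorUnitary.2) hX.eigenvectorUnitary.2
  have he : ∑ j, Real.exp (hX.eigenvalues j) = 1 := by
    rw [mexp, mfun_eq_cfc _ hX, trace_cfc _ hX] at hX1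
    exact_mod_cast hX1
  have htr := trace_conj_diagonal_mul_conj_diagonal (hρ.eigenvectorUnitary : Matrix ι ι ℂ)
    hX.eigenvectorUnitary hρ.eigenvalues hX.eigenvalues
  rw [← eq_eigenvectorUnitary_mul hρ, ← eq_eigenvectorUnitary_mul hX] at htr
  rw [vnEntropy, dif_pos hρ, htr, Complex.ofReal_re, neg_neg,
    sum_mul_log_sub_eq_sum_klFun (sum_normSq_row_eq_one hW) (sum_normSq_col_eq_one hW)
      (sum_eigenvalues_eq_one hρ hρ1) he]

theorem normSq_mul_exp_mul_klFun_nonneg (hρ : ρ.PosSemidef) (hX : X.IsHermitian) (i j : ι) :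
    0 ≤ Complex.normSq
          ((star (hρ.1.eigenvectorUnitary : Matrix ι ι ℂ) * hX.eigenvectorUnitary) i j) *
        (Real.exp (hX.eigenvalues j) *
          klFun (hρ.1.eigenvalues i / Real.exp (hX.eigenvalues j))) :=
  mul_nonneg (Complex.normSq_nonneg _) <| mul_nonneg (Real.exp_pos _).le <|
    klFun_nonneg <| div_nonneg (hρ.eigenvalues_nonneg i) (Real.exp_pos _).le

theorem vnEntropy_le_neg_re_trace_mul (hρ : ρ.PosSemidef) (hρ1 : ρ.trace = 1)
    (hX : X.IsHermitian) (hX1 : (mexp X).trace = 1) :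
    vnEntropy ρ ≤ -(ρ * X).trace.re := by
  have hgap := neg_vnEntropy_sub_re_trace_mul_eq hρ.1 hρ1 hX hX1
  have := Finset.sum_nonneg fun i (_ : i ∈ Finset.univ) =>
    Finset.sum_nonneg fun j (_ : j ∈ Finset.univ) => normSq_mul_exp_mul_klFun_nonneg hρ hX i j
  linarith

theorem eq_mexp_of_vnEntropy_eq (hρ : ρ.PosSemidef) (hρ1 : ρ.trace = 1)
    (hX : X.IsHermitian) (hX1 : (mexp X).trace = 1)
    (h : vnEntropy ρ = -(ρ * X).trace.re) : ρ = mexp X := by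
  have hgap := neg_vnEntropy_sub_re_trace_mul_eq hρ.1 hρ1 hX hX1
  rw [h, neg_neg, sub_self, eq_comm, Finset.sum_eq_zero_iff_of_nonneg fun i _ =>
    Finset.sum_nonneg fun j _ => normSq_mul_exp_mul_klFun_nonneg hρ hX i j] at hgap
  rw [eq_eigenvectorUnitary_mul hρ.1, mexp, mfun_eq_cfc _ hX, cfc_eq_eigenvectorUnitary_mul _ hX]
  refine conj_diagonal_eq_of_apply_ne_zero hρ.1.eigenvectorUnitary.2 hX.eigenvectorUnitary.2
    fun i j hij => ?_
  have hterm := (Finset.sum_eq_zero_iff_of_nonneg fun j _ =>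
    normSq_mul_exp_mul_klFun_nonneg hρ hX i j).mp (hgap i (Finset.mem_univ i)) j (Finset.mem_univ j)
  rw [mul_eq_zero, mul_eq_zero, Complex.normSq_eq_zero, klFun_eq_zero_iff
    (div_nonneg (hρ.eigenvalues_nonneg i) (Real.exp_pos _).le),
    div_eq_one_iff_eq (Real.exp_ne_zero _)] at hterm
  exact hterm.resolve_left hij |>.resolve_left (Real.exp_ne_zero _)

theorem vnEntropy_nonneg (hρ : ρ.PosSemidef) (hρ1 : ρ.trace = 1) : 0 ≤ vnEntropy ρ := by
  rw [vnEntropy, dif_pos hρ.1, ← Finset.sum_neg_distrib]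
  refine Finset.sum_nonneg fun i _ => ?_
  have hle : hρ.1.eigenvalues i ≤ 1 := sum_eigenvalues_eq_one hρ.1 hρ1 ▸
    Finset.single_le_sum (fun j _ => hρ.eigenvalues_nonneg j) (Finset.mem_univ i)
  simpa [Real.negMulLog] using Real.negMulLog_nonneg (hρ.eigenvalues_nonneg i) hle

theorem vnEntropy_le_log_card (hρ : ρ.PosSemidef) (hρ1 : ρ.trace = 1) :
    vnEntropy ρ ≤ Real.log (Fintype.card ι) := by
  have hd : (0 : ℝ) < Fintype.card ι := by
    rcases isEmpty_or_nonempty ι with h | h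
    · simp [trace] at hρ1
    · exact_mod_cast Fintype.card_pos
  -- Gibbs' inequality against the maximally mixed state `e^c • 1 = (card ι)⁻¹ • 1`.
  set c : ℝ := -Real.log (Fintype.card ι)
  have hX : (algebraMap ℝ (Matrix ι ι ℂ) c).IsHermitian := IsSelfAdjoint.algebraMap _ (.all c)
  have hX1 : (mexp (algebraMap ℝ (Matrix ι ι ℂ) c)).trace = 1 := by
    rw [mexp, mfun_eq_cfc _ hX, cfc_algebraMap, Algebra.algebraMap_eq_smul_one, trace_smul,
      trace_one, Real.exp_neg, Real.exp_log hd, Complex.real_smul]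
    push_cast
    exact inv_mul_cancel₀ (by exact_mod_cast hd.ne')
  have := vnEntropy_le_neg_re_trace_mul hρ hρ1 hX hX1
  rw [Algebra.algebraMap_eq_smul_one, mul_smul_one, trace_smul, hρ1] at this
  simpa only [c, Complex.real_smul, mul_one, Complex.ofReal_re, neg_neg] using this

end GibbsInequality

section PartialTrace

variable {A B R : Type*}

def slice (M : Matrix (A × R) (A × R) ℂ) (r r' : R) : Matrix A A ℂ :=
  Matrix.of fun a a' => M (a, r) (a', r')

theorem one_kronecker_mul_apply [Fintype A] [Fintype R] [DecidableEq A] {C : Type*}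
    (X : Matrix R R ℂ) (M : Matrix (A × R) C ℂ) (a : A) (r : R) (c : C) :
    ((1 : Matrix A A ℂ) ⊗ₖ X * M) (a, r) c = ∑ s, X r s * M (a, s) c := by
  simp [mul_apply, Fintype.sum_prod_type, one_apply, ite_mul]

theorem mul_one_kronecker_apply [Fintype A] [Fintype R] [DecidableEq A] {C : Type*}
    (Y : Matrix R R ℂ) (M : Matrix C (A × R) ℂ) (c : C) (a : A) (r : R) :
    (M * (1 : Matrix A A ℂ) ⊗ₖ Y) c (a, r) = ∑ s, M c (a, s) * Y s r := by
  simp [mul_apply, Fintype.sum_prod_type, one_apply, mul_ite]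

theorem slice_one_kronecker_mul_mul [Fintype A] [Fintype R] [DecidableEq A]
    (X Y : Matrix R R ℂ) (M : Matrix (A × R) (A × R) ℂ) (r r' : R) :
    slice ((1 : Matrix A A ℂ) ⊗ₖ X * M * (1 : Matrix A A ℂ) ⊗ₖ Y) r r'
      = ∑ s, ∑ s', (X r s * Y s' r') • slice M s s' := by
  ext a a'
  simp only [slice, of_apply, mul_one_kronecker_apply, one_kronecker_mul_apply,
    Matrix.sum_apply, Matrix.smul_apply, smul_eq_mul, Finset.sum_mul]
  rw [Finset.sum_comm]
  exact Finset.sum_congr rfl fun s _ => Finset.sum_congr rfl fun s' _ => by ring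

theorem slice_extendId [Fintype A] [Fintype B] [Fintype R]
    (L : Matrix A A ℂ →ₗ[ℂ] Matrix B B ℂ) (M : Matrix (A × R) (A × R) ℂ) (r r' : R) :
    slice (extendId L M) r r' = L (slice M r r') :=
  rfl

theorem extendId_one_kronecker_mul_mul [Fintype A] [Fintype B] [Fintype R] [DecidableEq A]
    [DecidableEq B] (L : Matrix A A ℂ →ₗ[ℂ] Matrix B B ℂ) (X Y : Matrix R R ℂ)
    (M : Matrix (A × R) (A × R) ℂ) :
    extendId L ((1 : Matrix A A ℂ) ⊗ₖ X * M * (1 : Matrix A A ℂ) ⊗ₖ Y)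
      = (1 : Matrix B B ℂ) ⊗ₖ X * extendId L M * (1 : Matrix B B ℂ) ⊗ₖ Y := by
  ext ⟨b, r⟩ ⟨b', r'⟩
  change slice (extendId L _) r r' b b' = slice (_ * extendId L M * _) r r' b b'
  rw [slice_extendId, slice_one_kronecker_mul_mul, slice_one_kronecker_mul_mul]
  simp only [map_sum, map_smul, slice_extendId]

theorem isHermitian_one_kronecker [DecidableEq B] {H : Matrix A A ℂ} (hH : H.IsHermitian) :
    ((1 : Matrix B B ℂ) ⊗ₖ H).IsHermitian := by
  rw [IsHermitian, conjTranspose_kronecker, conjTranspose_one, hH.eq]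

theorem ptraceFst_apply [Fintype A] (M : Matrix (A × R) (A × R) ℂ) (r r' : R) :
    ptraceFst M r r' = (slice M r r').trace :=
  rfl

theorem ptraceFst_extendId [Fintype A] [Fintype B] [Fintype R]
    {L : Matrix A A ℂ →ₗ[ℂ] Matrix B B ℂ} (hL : ∀ M, (L M).trace = M.trace)
    (M : Matrix (A × R) (A × R) ℂ) : ptraceFst (extendId L M) = ptraceFst M := by
  ext r r'
  rw [ptraceFst_apply, slice_extendId, hL, ptraceFst_apply]

theorem trace_ptraceFst [Fintype A] [Fintype R] (M : Matrix (A × R) (A × R) ℂ) :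
    (ptraceFst M).trace = M.trace := by
  simp only [trace, diag_apply, ptraceFst, of_apply, Fintype.sum_prod_type]
  exact Finset.sum_comm

theorem trace_extendId [Fintype A] [Fintype B] [Fintype R]
    {L : Matrix A A ℂ →ₗ[ℂ] Matrix B B ℂ} (hL : ∀ M, (L M).trace = M.trace)
    (M : Matrix (A × R) (A × R) ℂ) : (extendId L M).trace = M.trace := by
  rw [← trace_ptraceFst, ptraceFst_extendId hL, trace_ptraceFst]

theorem ptraceFst_one_kronecker_mul_mul [Fintype A] [Fintype R] [DecidableEq A]
    (X Y : Matrix R R ℂ) (M : Matrix (A × R) (A × R) ℂ) :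
    ptraceFst ((1 : Matrix A A ℂ) ⊗ₖ X * M * (1 : Matrix A A ℂ) ⊗ₖ Y) =
      X * ptraceFst M * Y := by
  ext r r'
  simp only [ptraceFst_apply, slice_one_kronecker_mul_mul, trace_sum, trace_smul, smul_eq_mul,
    mul_apply, Finset.sum_mul]
  rw [Finset.sum_comm]
  exact Finset.sum_congr rfl fun s _ => Finset.sum_congr rfl fun s' _ => by ring

theorem trace_mul_one_kronecker [Fintype A] [Fintype R] [DecidableEq A]
    (M : Matrix (A × R) (A × R) ℂ) (H : Matrix R R ℂ) :
    (M * (1 : Matrix A A ℂ) ⊗ₖ H).trace = (ptraceFst M * H).trace := by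
  simp only [trace, diag_apply, Fintype.sum_prod_type, mul_one_kronecker_apply]
  simp only [mul_apply, ptraceFst, of_apply, Finset.sum_mul]
  rw [Finset.sum_comm]
  exact Finset.sum_congr rfl fun r _ => Finset.sum_comm

theorem posSemidef_ptraceFst [Fintype A] [Fintype R] {M : Matrix (A × R) (A × R) ℂ}
    (hM : M.PosSemidef) : (ptraceFst M).PosSemidef := by
  have h : ptraceFst M = ∑ a, M.submatrix (a, ·) (a, ·) := by
    ext r r'
    simp [ptraceFst, Matrix.sum_apply]
  rw [h]
  exact posSemidef_sum _ fun a _ => hM.submatrix _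

theorem phiMat_eq_vecMulVec [DecidableEq A] :
    PhiMat A = vecMulVec (fun p : A × A => if p.1 = p.2 then 1 else 0)
      (star fun p : A × A => if p.1 = p.2 then 1 else 0) := by
  ext p q
  by_cases hp : p.1 = p.2 <;> by_cases hq : q.1 = q.2 <;> simp [PhiMat, vecMulVec_apply, hp, hq]

theorem posSemidef_phiMat [Fintype A] [DecidableEq A] : (PhiMat A).PosSemidef := by
  rw [phiMat_eq_vecMulVec]
  exact posSemidef_vecMulVec_self_star _

theorem slice_phiMat [DecidableEq A] (r r' : A) : slice (PhiMat A) r r' = single r r' 1 := by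
  ext a a'
  simp [slice, PhiMat, single_apply, eq_comm]

theorem ptraceFst_phiMat [Fintype A] [DecidableEq A] : ptraceFst (PhiMat A) = 1 := by
  ext r r'
  rw [ptraceFst_apply, slice_phiMat, one_apply]
  split_ifs with h
  · rw [h, trace_single_eq_same]
  · exact trace_single_eq_of_ne r r' 1 h

theorem ptraceFst_choi [Fintype A] [DecidableEq A] [Fintype B]
    {L : Matrix A A ℂ →ₗ[ℂ] Matrix B B ℂ} (hL : ∀ M, (L M).trace = M.trace) :
    ptraceFst (choi L) = 1 := by
  rw [choi, ptraceFst_extendId hL, ptraceFst_phiMat]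

theorem choi_apply [Fintype A] [DecidableEq A] [Fintype B]
    (L : Matrix A A ℂ →ₗ[ℂ] Matrix B B ℂ) (b b' : B) (x y : A) :
    choi L (b, x) (b', y) = L (single x y 1) b b' := by
  rw [choi, ← slice_phiMat]
  rfl

theorem choi_injective [Fintype A] [DecidableEq A] [Fintype B] :
    Function.Injective (choi : (Matrix A A ℂ →ₗ[ℂ] Matrix B B ℂ) → _) := by
  intro N T h
  refine Matrix.ext_linearMap ℂ fun x y => LinearMap.ext_ring ?_
  ext b b'
  simpa [choi_apply] using congr_fun (congr_fun h (b, x)) (b', y)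

end PartialTrace

section ReferenceState

variable {A B : Type*} [Fintype A] [DecidableEq A] [Fintype B] [DecidableEq B]

theorem one_kronecker_msqrt_mul_minvsqrt {φ : Matrix A A ℂ} (hφ : φ.PosDef) :
    (1 : Matrix B B ℂ) ⊗ₖ msqrt φ * (1 : Matrix B B ℂ) ⊗ₖ minvsqrt φ = 1 := by
  rw [← mul_kronecker_mul, Matrix.one_mul, msqrt_mul_minvsqrt_of_posDef hφ, one_kronecker_one]

theorem one_kronecker_minvsqrt_mul_msqrt {φ : Matrix A A ℂ} (hφ : φ.PosDef) :
    (1 : Matrix B B ℂ) ⊗ₖ minvsqrt φ * (1 : Matrix B B ℂ) ⊗ₖ msqrt φ = 1 :=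
  mul_eq_one_comm.mp (one_kronecker_msqrt_mul_minvsqrt hφ)

theorem isUnit_one_kronecker_msqrt {φ : Matrix A A ℂ} (hφ : φ.PosDef) :
    IsUnit ((1 : Matrix B B ℂ) ⊗ₖ msqrt φ) :=
  ⟨⟨_, _, one_kronecker_msqrt_mul_minvsqrt hφ, one_kronecker_minvsqrt_mul_msqrt hφ⟩, rfl⟩

theorem isUnit_one_kronecker_minvsqrt {φ : Matrix A A ℂ} (hφ : φ.PosDef) :
    IsUnit ((1 : Matrix B B ℂ) ⊗ₖ minvsqrt φ) :=
  ⟨⟨_, _, one_kronecker_minvsqrt_mul_msqrt hφ, one_kronecker_msqrt_mul_minvsqrt hφ⟩, rfl⟩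

theorem extendId_stateAR (L : Matrix A A ℂ →ₗ[ℂ] Matrix B B ℂ) (φ : Matrix A A ℂ) :
    extendId L (stateAR φ) =
      (1 : Matrix B B ℂ) ⊗ₖ msqrt φ * choi L * (1 : Matrix B B ℂ) ⊗ₖ msqrt φ :=
  extendId_one_kronecker_mul_mul L _ _ _

theorem ptraceFst_stateAR {φ : Matrix A A ℂ} (hφ : φ.PosSemidef) :
    ptraceFst (stateAR φ) = φ := by
  rw [stateAR, ptraceFst_one_kronecker_mul_mul, ptraceFst_phiMat, Matrix.mul_one,
    msqrt_mul_self_of_posSemidef hφ]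

theorem isDensity_stateAR {φ : Matrix A A ℂ} (hφ : IsDensity φ) : IsDensity (stateAR φ) := by
  refine ⟨?_, by rw [← trace_ptraceFst, ptraceFst_stateAR hφ.1, hφ.2]⟩
  have h := posSemidef_phiMat.mul_mul_conjTranspose_same ((1 : Matrix A A ℂ) ⊗ₖ msqrt φ)
  rwa [(isHermitian_one_kronecker (isHermitian_msqrt φ)).eq] at h

theorem condEntropy_extendId_stateAR {L : Matrix A A ℂ →ₗ[ℂ] Matrix B B ℂ}
    (hL : ∀ M, (L M).trace = M.trace) {φ : Matrix A A ℂ} (hφ : φ.PosSemidef) :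
    condEntropy (extendId L (stateAR φ)) = vnEntropy (extendId L (stateAR φ)) - vnEntropy φ := by
  rw [condEntropy, ptraceFst_extendId hL, ptraceFst_stateAR hφ]

theorem choi_eq_of_extendId_stateAR_eq {N T : Matrix A A ℂ →ₗ[ℂ] Matrix B B ℂ}
    {φ : Matrix A A ℂ} (hφ : φ.PosDef)
    (h : extendId N (stateAR φ) = extendId T (stateAR φ)) :
    choi N = choi T := by
  have hK := isUnit_one_kronecker_msqrt (B := B) hφ
  rw [extendId_stateAR, extendId_stateAR] at h
  exact hK.mul_left_cancel (hK.mul_right_cancel h)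

theorem extendId_stateAR_eq_of_choi_eq {φ : Matrix A A ℂ} (hφ : φ.PosDef)
    {L : Matrix A A ℂ →ₗ[ℂ] Matrix B B ℂ} {Z : Matrix (B × A) (B × A) ℂ}
    (h : choi L =
      (1 : Matrix B B ℂ) ⊗ₖ minvsqrt φ * Z * (1 : Matrix B B ℂ) ⊗ₖ minvsqrt φ) :
    extendId L (stateAR φ) = Z := by
  rw [extendId_stateAR, h]
  simp only [← Matrix.mul_assoc, one_kronecker_msqrt_mul_minvsqrt hφ, Matrix.one_mul]
  rw [Matrix.mul_assoc, one_kronecker_minvsqrt_mul_msqrt hφ, Matrix.mul_one]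

theorem trace_extendId_stateAR_mul_conj {φ : Matrix A A ℂ} (hφ : φ.PosDef)
    (L : Matrix A A ℂ →ₗ[ℂ] Matrix B B ℂ) (G : Matrix (B × A) (B × A) ℂ) :
    (extendId L (stateAR φ) *
        ((1 : Matrix B B ℂ) ⊗ₖ minvsqrt φ * G *
          (1 : Matrix B B ℂ) ⊗ₖ minvsqrt φ)).trace
      = (choi L * G).trace := by
  rw [extendId_stateAR]
  set K := (1 : Matrix B B ℂ) ⊗ₖ msqrt φ
  set K' := (1 : Matrix B B ℂ) ⊗ₖ minvsqrt φ
  calc (K * choi L * K * (K' * G * K')).trace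
      = (K * (choi L * (K * K') * G * K')).trace := by simp only [Matrix.mul_assoc]
    _ = (choi L * (K * K') * G * (K' * K)).trace := by
        rw [trace_mul_comm]
        simp only [Matrix.mul_assoc]
    _ = (choi L * G).trace := by
        rw [one_kronecker_msqrt_mul_minvsqrt hφ, one_kronecker_minvsqrt_mul_msqrt hφ,
          Matrix.mul_one, Matrix.mul_one]

end ReferenceState

section ChannelEntropy

variable {d : ℕ} {B : Type*} [Fintype B]

theorem isDensity_extendId {L : Mat d →ₗ[ℂ] Matrix B B ℂ} (hL : IsChannel L)
    {ρ : Matrix (Fin d × Fin d) (Fin d × Fin d) ℂ} (hρ : IsDensity ρ) :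
    IsDensity (extendId L ρ) :=
  ⟨hL.1 d ρ hρ.1, (trace_extendId hL.2 ρ).trans hρ.2⟩

theorem neg_log_le_condEntropy_extendId [DecidableEq B] {L : Mat d →ₗ[ℂ] Matrix B B ℂ}
    (hL : IsChannel L) {ρ : Matrix (Fin d × Fin d) (Fin d × Fin d) ℂ} (hρ : IsDensity ρ) :
    -Real.log d ≤ condEntropy (extendId L ρ) := by
  obtain ⟨hτ, hτ1⟩ := isDensity_extendId hL hρ
  have hS := vnEntropy_nonneg hτ hτ1
  have hSR := vnEntropy_le_log_card (posSemidef_ptraceFst hτ) ((trace_ptraceFst _).trans hτ1)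
  rw [Fintype.card_fin] at hSR
  rw [condEntropy]
  linarith

theorem channelEntropy_le_condEntropy [DecidableEq B] {L : Mat d →ₗ[ℂ] Matrix B B ℂ}
    (hL : IsChannel L) {ρ : Matrix (Fin d × Fin d) (Fin d × Fin d) ℂ} (hρ : IsDensity ρ) :
    channelEntropy L ≤ condEntropy (extendId L ρ) :=
  csInf_le ⟨-Real.log d, fun _ ⟨_, hσ, hx⟩ => hx ▸ neg_log_le_condEntropy_extendId hL hσ⟩
    ⟨ρ, hρ, rfl⟩

end ChannelEntropy

section MaximumChannelEntropy

variable {dA dB J : ℕ} {C : Fin J → Matrix (Fin dB × Fin dA) (Fin dB × Fin dA) ℂ}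
  {q : Fin J → ℝ}

theorem trace_choi_mul_of_feasible {L : Mat dA →ₗ[ℂ] Mat dB} (hL : Feasible C q L)
    (μ : Fin J → ℝ) (H : Mat dA) :
    (choi L * (∑ j, (μ j : ℂ) • C j - (1 : Mat dB) ⊗ₖ H)).trace
      = ∑ j, (μ j : ℂ) * q j - H.trace := by
  rw [Matrix.mul_sub, trace_sub, trace_mul_one_kronecker, ptraceFst_choi hL.1.2, Matrix.one_mul,
    Matrix.mul_sum, trace_sum]
  congr 1
  refine Finset.sum_congr rfl fun j _ => ?_
  rw [Matrix.mul_smul, trace_smul, trace_mul_comm, hL.2 j, smul_eq_mul]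

theorem eq_of_isThermalChannel_of_extendId_stateAR_eq_mexp {T N : Mat dA →ₗ[ℂ] Mat dB}
    {φR : Mat dA} {X : Matrix (Fin dB × Fin dA) (Fin dB × Fin dA) ℂ}
    (hT : IsThermalChannel C q T) (hφR : IsDensity φR) (hφfull : φR.PosDef)
    (hφopt : condEntropy (extendId T (stateAR φR)) = channelEntropy T)
    (hX : X.IsHermitian) (hτ : extendId T (stateAR φR) = mexp X)
    (hconst : ∀ L, Feasible C q L →
      (extendId L (stateAR φR) * X).trace = (extendId T (stateAR φR) * X).trace)
    (hN : IsThermalChannel C q N) : N = T := by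
  obtain ⟨hτN, hτN1⟩ := isDensity_extendId hN.1.1 (isDensity_stateAR hφR)
  have hX1 : (mexp X).trace = 1 := hτ ▸ (isDensity_extendId hT.1.1 (isDensity_stateAR hφR)).2
  have hle : vnEntropy (extendId T (stateAR φR)) ≤ vnEntropy (extendId N (stateAR φR)) := by
    have h := channelEntropy_le_condEntropy hN.1.1 (isDensity_stateAR hφR)
    rw [le_antisymm (hT.2 N hN.1) (hN.2 T hT.1), ← hφopt,
      condEntropy_extendId_stateAR hT.1.1.2 hφR.1,
      condEntropy_extendId_stateAR hN.1.1.2 hφR.1] at h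
    linarith
  have hτT : vnEntropy (extendId T (stateAR φR)) = -(extendId N (stateAR φR) * X).trace.re := by
    rw [hconst N hN.1, hτ, vnEntropy_mexp hX]
  have hgibbs := vnEntropy_le_neg_re_trace_mul hτN hτN1 hX hX1
  have hτNT : extendId N (stateAR φR) = extendId T (stateAR φR) :=
    (eq_mexp_of_vnEntropy_eq hτN hτN1 hX hX1 (by linarith)).trans hτ.symm
  exact choi_injective (choi_eq_of_extendId_stateAR_eq hφfull hτNT)

end MaximumChannelEntropy

theorem thermal_channel_full_rank_unique_general
    {dA dB J : ℕ}
    (C : Fin J → Matrix (Fin dB × Fin dA) (Fin dB × Fin dA) ℂ)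
    (hC : ∀ j, (C j).IsHermitian) (q : Fin J → ℝ)
    (T : Mat dA →ₗ[ℂ] Mat dB)
    (hT : IsThermalChannel C q T)
    (φR : Mat dA) (hφR : IsDensity φR) (hφfull : φR.PosDef)
    (hφopt : condEntropy (extendId T (stateAR φR)) = channelEntropy T)
    (μ : Fin J → ℝ) (F : Mat dA)
    (S Y : Matrix (Fin dB × Fin dA) (Fin dB × Fin dA) ℂ)
    (hF : F.IsHermitian)
    (hS : S.PosSemidef) (hSJ : S * choi T = 0)
    (hYP : ((1 : Mat dB) ⊗ₖ suppProj φR) * Y * ((1 : Mat dB) ⊗ₖ suppProj φR) = 0)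
    (hform : choi T =
        ((1 : Mat dB) ⊗ₖ minvsqrt φR) *
            expSupp ((1 : Mat dB) ⊗ₖ suppProj φR)
              (-(((1 : Mat dB) ⊗ₖ minvsqrt φR) *
                  (∑ j, (μ j : ℂ) • C j
                    - (1 : Mat dB) ⊗ₖ (F + xlogx φR) - S) *
                  ((1 : Mat dB) ⊗ₖ minvsqrt φR)))
            * ((1 : Mat dB) ⊗ₖ minvsqrt φR)
          + Y) :
    S = 0 ∧ Y = 0 ∧ ∀ N : Mat dA →ₗ[ℂ] Mat dB, IsThermalChannel C q N → N = T := by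
  have hP : (1 : Mat dB) ⊗ₖ suppProj φR = 1 := by
    rw [suppProj_eq_one_of_posDef hφfull, one_kronecker_one]
  have hY0 : Y = 0 := by simpa [hP] using hYP
  set K' := (1 : Mat dB) ⊗ₖ minvsqrt φR
  set G := ∑ j, (μ j : ℂ) • C j - (1 : Mat dB) ⊗ₖ (F + xlogx φR)
  have hG : G.IsHermitian :=
    (isSelfAdjoint_sum _ fun j _ => (hC j).smul (Complex.conj_ofReal _)).sub
      (isHermitian_one_kronecker (hF.add (isHermitian_mfun _ _)))
  have hK'H : K'.IsHermitian := isHermitian_one_kronecker (isHermitian_mfun _ _)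
  have hconj : ∀ {Z}, Z.IsHermitian → (K' * Z * K').IsHermitian := fun hZ => by
    simpa only [hK'H.eq] using isHermitian_mul_mul_conjTranspose K' hZ
  have hchoi : choi T = K' * mexp (-(K' * (G - S) * K')) * K' := by
    rw [hform, hY0, add_zero, expSupp, hP, sub_self, sub_zero]
  have hS0 : S = 0 := by
    have hK' : IsUnit K' := isUnit_one_kronecker_minvsqrt hφfull
    refine ((hK'.mul (isUnit_mexp (hconj (hG.sub hS.1)).neg)).mul hK').mul_left_eq_zero.mp ?_
    rwa [← hchoi]
  refine ⟨hS0, hY0, fun N hN => ?_⟩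
  rw [hS0, sub_zero] at hchoi
  refine eq_of_isThermalChannel_of_extendId_stateAR_eq_mexp hT hφR hφfull hφopt (hconj hG).neg
    (extendId_stateAR_eq_of_choi_eq hφfull hchoi) (fun L hL => ?_) hN
  rw [mul_neg, mul_neg, trace_neg, trace_neg, trace_extendId_stateAR_mul_conj hφfull L G,
    trace_extendId_stateAR_mul_conj hφfull T G, trace_choi_mul_of_feasible hL,
    trace_choi_mul_of_feasible hT.1]

/-- **Full-rank case: vanishing of the correction terms and uniqueness.**
If the minimizing state `φ_R` of a thermal channel `T` has full rank, then in
the canonical form of `J(T)` one has `S_{BR} = 0` and `Y_{BR} = 0`, and `T` is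
the unique optimizer of the maximum channel entropy problem. -/
theorem thermal_channel_full_rank_unique
    {dA dB J : ℕ}
    (C : Fin J → Matrix (Fin dB × Fin dA) (Fin dB × Fin dA) ℂ)
    (hC : ∀ j, (C j).IsHermitian) (q : Fin J → ℝ)
    (hfeas : ∃ N, Feasible C q N)
    (T : Mat dA →ₗ[ℂ] Mat dB)
    (hT : IsThermalChannel C q T)
    (φR : Mat dA) (hφR : IsDensity φR) (hφfull : φR.PosDef)
    (hφopt : condEntropy (extendId T (stateAR φR)) = channelEntropy T)
    (μ : Fin J → ℝ) (F : Mat dA)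
    (S Y : Matrix (Fin dB × Fin dA) (Fin dB × Fin dA) ℂ)
    (hF : F.IsHermitian)
    (hS : S.PosSemidef) (hSJ : S * choi T = 0)
    (hsupp : ((1 : Mat dB) ⊗ₖ ((1 : Mat dA) - suppProj φR)) *
        (∑ j, (μ j : ℂ) • C j - (1 : Mat dB) ⊗ₖ F - S) = 0)
    (hY : Y.IsHermitian)
    (hYP : ((1 : Mat dB) ⊗ₖ suppProj φR) * Y * ((1 : Mat dB) ⊗ₖ suppProj φR) = 0)
    (hform : choi T =
        ((1 : Mat dB) ⊗ₖ minvsqrt φR) *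
            expSupp ((1 : Mat dB) ⊗ₖ suppProj φR)
              (-(((1 : Mat dB) ⊗ₖ minvsqrt φR) *
                  (∑ j, (μ j : ℂ) • C j
                    - (1 : Mat dB) ⊗ₖ (F + xlogx φR) - S) *
                  ((1 : Mat dB) ⊗ₖ minvsqrt φR))) *
            ((1 : Mat dB) ⊗ₖ minvsqrt φR)
          + Y) :
    S = 0 ∧ Y = 0 ∧ ∀ N : Mat dA →ₗ[ℂ] Mat dB, IsThermalChannel C q N → N = T :=
  thermal_channel_full_rank_unique_general C hC q T hT φR hφR hφfull hφopt μ F S Y hF hS hSJ hYP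
    hform

end ThermalChannel
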